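/- Let U₀ be a utility function with inverse marginal I₀ = (U₀′)^{−1}, let I₁ be an inverse marginal function satisfying the functional equation I₁(a·y) + b·I₁(y) = (1+b)·I₀(c·y) for all y > 0, and let U₁ be the utility function defined by U₁(x) = U₀(1) + p·∫_{I₁((q/p)·U₀′(1))}^{x} I₁^{−1}(ξ) dξ + (1−p)·∫_{I₁(((1−q)/(1−p))·U₀′(1))}^{x} I₁^{−1}(ξ) dξ. For x > 0 set X^u(x) = I₁((q/p)·U₀′(x)), X^d(x) = I₁(((1−q)/(1−p))·U₀′(x)) and π*(x) = (X^u(x) − X^d(x))/(u−d). Then for every x > 0: −x/(u−1) ≤ π*(x) ≤ x/(1−d), x + π*(x)·(u−1) = X^u(x), x + π*(x)·(d−1) = X^d(x), and p·U₁(X^u(x)) + (1−p)·U₁(X^d(x)) = U₀(x); that is, π*(x) attains the supremum in the single-period inverse investment problem. -/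

import Mathlib

/-!
Evaluated at `y = ((1-q)/(1-p))·U₀'(x)`, the functional equation becomes the budget constraint
`q·Xᵘ(x) + (1-q)·Xᵈ(x) = x` under the risk-neutral probability `q`; the wealth equations follow
from it, and admissibility from the positivity of `I₁`. Since `U₁' = I₁⁻¹`, the first-order
conditions `U₁'(Xᵘ) = (q/p)·U₀'` and `U₁'(Xᵈ) = ((1-q)/(1-p))·U₀'` hold, so differentiating the
budget constraint shows that `x ↦ p·U₁(Xᵘ(x)) + (1-p)·U₁(Xᵈ(x))` has derivative `U₀'`. The lower
limits of integration in `U₁` are chosen so that this function agrees with `U₀` at `x = 1`.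
-/

open Set Filter

noncomputable section

/-- A utility function: `C²` on `(0,∞)`, strictly increasing and strictly concave there,
satisfying the Inada conditions. -/
def IsUtility (U : ℝ → ℝ) : Prop :=
  ContDiffOn ℝ 2 U (Set.Ioi 0) ∧
  (∀ x > 0, 0 < deriv U x) ∧
  (∀ x > 0, deriv (deriv U) x < 0) ∧
  Tendsto (deriv U) (nhdsWithin 0 (Set.Ioi 0)) atTop ∧
  Tendsto (deriv U) atTop (nhds 0)

/-- An inverse marginal function: positive, `C¹` on `(0,∞)`, strictly decreasing derivative,
with `I(∞)=0` and `I(0+)=∞`. -/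
def IsInvMarginal (I : ℝ → ℝ) : Prop :=
  (∀ y > 0, 0 < I y) ∧
  ContDiffOn ℝ 1 I (Set.Ioi 0) ∧
  (∀ y > 0, deriv I y < 0) ∧
  Tendsto I atTop (nhds 0) ∧
  Tendsto I (nhdsWithin 0 (Set.Ioi 0)) atTop

/-- `I` is the inverse of the marginal `U'` on the positive reals: `I = (U')⁻¹`. -/
def InvMarginalOf (I U : ℝ → ℝ) : Prop :=
  (∀ x > 0, I (deriv U x) = x) ∧ (∀ y > 0, 0 < I y ∧ deriv U (I y) = y)

/-- `J` is the inverse function of `I` on the positive reals. -/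
def IsInverseOf (J I : ℝ → ℝ) : Prop :=
  (∀ y > 0, J (I y) = y) ∧ (∀ x > 0, 0 < J x ∧ I (J x) = x)

/-- The single-period inverse investment problem:
`U₀(x) = sup {p·U₁(x+π(u−1)) + (1−p)·U₁(x+π(d−1)) : −x/(u−1) ≤ π ≤ x/(1−d)}` for all `x > 0`. -/
def SPIIP (u d p : ℝ) (U₀ U₁ : ℝ → ℝ) : Prop :=
  ∀ x > 0, U₀ x =
    sSup ((fun pi => p * U₁ (x + pi * (u - 1)) + (1 - p) * U₁ (x + pi * (d - 1))) ''
      Set.Icc (-(x / (u - 1))) (x / (1 - d)))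

open intervalIntegral Topology

theorem StrictAntiOn.continuousAt_of_image_mem_nhds {f : ℝ → ℝ} {s : Set ℝ} {a : ℝ}
    (hf : StrictAntiOn f s) (hs : s ∈ 𝓝 a) (hfs : f '' s ∈ 𝓝 (f a)) : ContinuousAt f a := by
  have hneg : StrictMonoOn (fun z => -f z) s := fun x hx y hy hxy => neg_lt_neg (hf hx hy hxy)
  have himage : (fun z => -f z) '' s ∈ 𝓝 (-f a) := by
    rw [← image_image (fun z => -z) f, image_neg_eq_neg, nhds_neg, Filter.mem_neg,
      Set.neg_preimage, neg_neg]
    exact hfs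
  exact continuousAt_neg_iff.mp (hneg.continuousAt_of_image_mem_nhds hs himage)

theorem IsInverseOf.strictAntiOn {I J : ℝ → ℝ} (hJ : IsInverseOf J I)
    (hI : StrictAntiOn I (Ioi 0)) : StrictAntiOn J (Ioi 0) := by
  intro x hx y hy hxy
  obtain ⟨hJx, hIJx⟩ := hJ.2 x hx
  obtain ⟨hJy, hIJy⟩ := hJ.2 y hy
  rwa [← hI.lt_iff_gt hJx hJy, hIJx, hIJy]

theorem IsInverseOf.continuousOn {I J : ℝ → ℝ} (hJ : IsInverseOf J I)
    (hI : StrictAntiOn I (Ioi 0)) (hIpos : ∀ y > 0, 0 < I y) : ContinuousOn J (Ioi 0) := by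
  intro x hx
  have hsurj : Ioi 0 ⊆ J '' Ioi 0 := fun y hy => ⟨I y, hIpos y hy, hJ.1 y hy⟩
  exact ((hJ.strictAntiOn hI).continuousAt_of_image_mem_nhds (Ioi_mem_nhds hx)
    (mem_of_superset (Ioi_mem_nhds (hJ.2 x hx).1) hsurj)).continuousWithinAt

theorem IsInvMarginal.strictAntiOn {I : ℝ → ℝ} (hI : IsInvMarginal I) :
    StrictAntiOn I (Ioi 0) :=
  strictAntiOn_of_deriv_neg (convex_Ioi 0) hI.2.1.continuousOn
    (fun y hy => hI.2.2.1 y (by rwa [interior_Ioi] at hy))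

theorem IsInvMarginal.differentiableAt {I : ℝ → ℝ} (hI : IsInvMarginal I) {y : ℝ} (hy : 0 < y) :
    DifferentiableAt ℝ I y :=
  (hI.2.1.differentiableOn one_ne_zero).differentiableAt (Ioi_mem_nhds hy)

theorem IsUtility.differentiableAt {U : ℝ → ℝ} (hU : IsUtility U) {x : ℝ} (hx : 0 < x) :
    DifferentiableAt ℝ U x :=
  (hU.1.differentiableOn two_ne_zero).differentiableAt (Ioi_mem_nhds hx)

theorem IsUtility.differentiableAt_deriv {U : ℝ → ℝ} (hU : IsUtility U) {x : ℝ} (hx : 0 < x) :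
    DifferentiableAt ℝ (deriv U) x :=
  ((hU.1.deriv_of_isOpen (m := 1) isOpen_Ioi (by norm_num)).differentiableOn
    one_ne_zero).differentiableAt (Ioi_mem_nhds hx)

theorem hasDerivAt_integral_of_continuousOn {E : Type*} [NormedAddCommGroup E]
    [NormedSpace ℝ E] [CompleteSpace E] {f : ℝ → E} {s : Set ℝ} {c z : ℝ}
    (hf : ContinuousOn f s) (hs : IsOpen s) (hs' : OrdConnected s) (hc : c ∈ s) (hz : z ∈ s) :
    HasDerivAt (fun t => ∫ ξ in c..t, f ξ) (f z) z :=
  integral_hasDerivAt_right ((hf.mono (hs'.uIcc_subset hc hz)).intervalIntegrable)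
    (hf.stronglyMeasurableAtFilter hs z hz) (hf.continuousAt (hs.mem_nhds hz))

theorem hasDerivAt_of_eq_weighted_integral {U J : ℝ → ℝ} {C p c₁ c₂ x : ℝ}
    (hU : ∀ x > 0, U x = C + p * (∫ ξ in c₁..x, J ξ) + (1 - p) * (∫ ξ in c₂..x, J ξ))
    (hJ : ContinuousOn J (Ioi 0)) (hc₁ : 0 < c₁) (hc₂ : 0 < c₂) (hx : 0 < x) :
    HasDerivAt U (J x) x := by
  have hint : ∀ c > (0 : ℝ), HasDerivAt (fun t => ∫ ξ in c..t, J ξ) (J x) x := fun c hc =>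
    hasDerivAt_integral_of_continuousOn hJ isOpen_Ioi ordConnected_Ioi hc hx
  have hsum := (((hint c₁ hc₁).const_mul p).const_add C).add ((hint c₂ hc₂).const_mul (1 - p))
  rw [show p * J x + (1 - p) * J x = J x by ring] at hsum
  exact hsum.congr_of_eventuallyEq (eventually_of_mem (Ioi_mem_nhds hx) hU)

theorem weighted_sum_eq_of_eq_weighted_integral {U J : ℝ → ℝ} {C p c₁ c₂ : ℝ}
    (hU : ∀ x > 0, U x = C + p * (∫ ξ in c₁..x, J ξ) + (1 - p) * (∫ ξ in c₂..x, J ξ))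
    (hc₁ : 0 < c₁) (hc₂ : 0 < c₂) : p * U c₁ + (1 - p) * U c₂ = C := by
  rw [hU c₁ hc₁, hU c₂ hc₂, integral_same, integral_same, integral_symm c₂ c₁]
  ring

def riskNeutralProb (u d : ℝ) : ℝ := (1 - d) / (u - d)

theorem riskNeutralProb_pos {u d : ℝ} (hu : 1 < u) (hd : d < 1) : 0 < riskNeutralProb u d :=
  div_pos (by linarith) (by linarith)

theorem riskNeutralProb_lt_one {u d : ℝ} (hu : 1 < u) (hd : d < 1) : riskNeutralProb u d < 1 :=
  (div_lt_one (by linarith)).2 (by linarith)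

/-- The optimal terminal wealth `I₁(k·U₀'(x))` in a state whose risk-neutral to physical
probability ratio is `k`: `Xᵘ` is `k = q/p`, `Xᵈ` is `k = (1-q)/(1-p)`. -/
def optimalWealth (I U : ℝ → ℝ) (k x : ℝ) : ℝ := I (k * deriv U x)

section OptimalWealth

variable {I J U : ℝ → ℝ} {k x : ℝ}

theorem optimalWealth_pos (hI : IsInvMarginal I) (hU : IsUtility U) (hk : 0 < k) (hx : 0 < x) :
    0 < optimalWealth I U k x :=
  hI.1 _ (mul_pos hk (hU.2.1 x hx))

theorem IsInverseOf.apply_optimalWealth (hJ : IsInverseOf J I) (hU : IsUtility U) (hk : 0 < k)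
    (hx : 0 < x) : J (optimalWealth I U k x) = k * deriv U x :=
  hJ.1 _ (mul_pos hk (hU.2.1 x hx))

theorem differentiableAt_optimalWealth (hI : IsInvMarginal I) (hU : IsUtility U) (hk : 0 < k)
    (hx : 0 < x) : DifferentiableAt ℝ (optimalWealth I U k) x :=
  (hI.differentiableAt (mul_pos hk (hU.2.1 x hx))).comp x
    ((hU.differentiableAt_deriv hx).const_mul k)

end OptimalWealth

theorem budget_identity {p q a b c x : ℝ} {U₀ I₀ I₁ : ℝ → ℝ} (hp0 : 0 < p) (hp1 : p < 1)
    (hq0 : 0 < q) (hq1 : q < 1) (ha : a = ((1 - p) * q) / (p * (1 - q)))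
    (hb : b = (1 - q) / q) (hc : c = (1 - p) / (1 - q))
    (hfeq : ∀ y > 0, I₁ (a * y) + b * I₁ y = (1 + b) * I₀ (c * y))
    (hU₀ : IsUtility U₀) (hI₀ : InvMarginalOf I₀ U₀) (hx : 0 < x) :
    q * optimalWealth I₁ U₀ (q / p) x + (1 - q) * optimalWealth I₁ U₀ ((1 - q) / (1 - p)) x
      = x := by
  have hp1' : 0 < 1 - p := by linarith
  have hq1' : 0 < 1 - q := by linarith
  set y := (1 - q) / (1 - p) * deriv U₀ x
  have hy : 0 < y := mul_pos (div_pos hq1' hp1') (hU₀.2.1 x hx)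
  have hay : a * y = q / p * deriv U₀ x := by
    simp only [y, ha]
    field_simp
  have hcy : c * y = deriv U₀ x := by
    simp only [y, hc]
    field_simp
  have hqb : q * b = 1 - q := by
    rw [hb]
    field_simp
  have hfeq_y := hfeq y hy
  rw [hay, hcy, hI₀.1 x hx] at hfeq_y
  unfold optimalWealth
  linear_combination q * hfeq_y - (I₁ y - x) * hqb

theorem wealth_eq_of_budget {u d q x Xu Xd : ℝ} (hdu : d < u) (hq : q = riskNeutralProb u d)
    (hbudget : q * Xu + (1 - q) * Xd = x) :
    x + (Xu - Xd) / (u - d) * (u - 1) = Xu ∧ x + (Xu - Xd) / (u - d) * (d - 1) = Xd := by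
  have hud : u - d ≠ 0 := by linarith
  subst hbudget hq
  unfold riskNeutralProb
  constructor <;> field_simp <;> ring

theorem admissible_of_wealth_nonneg {u d x π Xu Xd : ℝ} (hu : 1 < u) (hd : d < 1)
    (hwu : x + π * (u - 1) = Xu) (hwd : x + π * (d - 1) = Xd) (hXu : 0 ≤ Xu) (hXd : 0 ≤ Xd) :
    -(x / (u - 1)) ≤ π ∧ π ≤ x / (1 - d) := by
  constructor
  · rw [← neg_div, div_le_iff₀ (by linarith)]
    linarith
  · rw [le_div_iff₀ (by linarith)]
    linarith

theorem budget_deriv_eq_one {XU XD : ℝ → ℝ} {q t XU' XD' : ℝ} (hXU : HasDerivAt XU XU' t)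
    (hXD : HasDerivAt XD XD' t) (hbudget : ∀ᶠ s in 𝓝 t, q * XU s + (1 - q) * XD s = s) :
    q * XU' + (1 - q) * XD' = 1 :=
  (((hXU.const_mul q).add (hXD.const_mul (1 - q))).congr_of_eventuallyEq
    (hbudget.mono fun _ hs => hs.symm)).unique (hasDerivAt_id t)

theorem hasDerivAt_expectedUtility {U₁ J XU XD : ℝ → ℝ} {p q m t XU' XD' : ℝ} (hp : p ≠ 0)
    (hp' : 1 - p ≠ 0) (hU₁u : HasDerivAt U₁ (J (XU t)) (XU t))
    (hU₁d : HasDerivAt U₁ (J (XD t)) (XD t)) (hXU : HasDerivAt XU XU' t)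
    (hXD : HasDerivAt XD XD' t) (hJu : J (XU t) = q / p * m)
    (hJd : J (XD t) = (1 - q) / (1 - p) * m) (hbudget : q * XU' + (1 - q) * XD' = 1) :
    HasDerivAt (fun s => p * U₁ (XU s) + (1 - p) * U₁ (XD s)) m t := by
  refine (((hU₁u.comp t hXU).const_mul p).add
    ((hU₁d.comp t hXD).const_mul (1 - p))).congr_deriv ?_
  rw [hJu, hJd]
  field_simp
  linear_combination m * hbudget

theorem expectedUtility_optimalWealth_eq {U₀ U₁ I₁ J₁ : ℝ → ℝ} {p q x : ℝ} (hp0 : 0 < p)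
    (hp1 : p < 1) (hq0 : 0 < q) (hq1 : q < 1) (hU₀ : IsUtility U₀) (hI₁ : IsInvMarginal I₁)
    (hJ₁ : IsInverseOf J₁ I₁) (hU₁ : ∀ x > 0, HasDerivAt U₁ (J₁ x) x)
    (hbudget : ∀ t > 0, q * optimalWealth I₁ U₀ (q / p) t
      + (1 - q) * optimalWealth I₁ U₀ ((1 - q) / (1 - p)) t = t)
    (hone : p * U₁ (optimalWealth I₁ U₀ (q / p) 1)
      + (1 - p) * U₁ (optimalWealth I₁ U₀ ((1 - q) / (1 - p)) 1) = U₀ 1) (hx : 0 < x) :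
    p * U₁ (optimalWealth I₁ U₀ (q / p) x)
      + (1 - p) * U₁ (optimalWealth I₁ U₀ ((1 - q) / (1 - p)) x) = U₀ x := by
  have hku : 0 < q / p := div_pos hq0 hp0
  have hkd : 0 < (1 - q) / (1 - p) := div_pos (by linarith) (by linarith)
  have hderiv : ∀ t > 0, HasDerivAt (fun s => p * U₁ (optimalWealth I₁ U₀ (q / p) s)
      + (1 - p) * U₁ (optimalWealth I₁ U₀ ((1 - q) / (1 - p)) s)) (deriv U₀ t) t := by
    intro t ht
    have hXU := (differentiableAt_optimalWealth hI₁ hU₀ hku ht).hasDerivAt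
    have hXD := (differentiableAt_optimalWealth hI₁ hU₀ hkd ht).hasDerivAt
    exact hasDerivAt_expectedUtility hp0.ne' (by linarith)
      (hU₁ _ (optimalWealth_pos hI₁ hU₀ hku ht)) (hU₁ _ (optimalWealth_pos hI₁ hU₀ hkd ht))
      hXU hXD (hJ₁.apply_optimalWealth hU₀ hku ht) (hJ₁.apply_optimalWealth hU₀ hkd ht)
      (budget_deriv_eq_one hXU hXD (eventually_of_mem (Ioi_mem_nhds ht) hbudget))
  exact isOpen_Ioi.eqOn_of_deriv_eq isPreconnected_Ioi
    (fun t ht => (hderiv t ht).differentiableAt.differentiableWithinAt)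
    (fun t ht => (hU₀.differentiableAt ht).differentiableWithinAt)
    (fun t ht => (hderiv t ht).deriv) (mem_Ioi.2 one_pos) hone hx

theorem stmt4_general
    (u d p q a b c : ℝ)
    (hu : 1 < u) (hd1 : d < 1) (hp0 : 0 < p) (hp1 : p < 1)
    (hq : q = (1 - d) / (u - d)) (ha : a = ((1 - p) * q) / (p * (1 - q)))
    (hb : b = (1 - q) / q) (hc : c = (1 - p) / (1 - q))
    (U₀ I₀ I₁ J₁ : ℝ → ℝ)
    (hU₀ : IsUtility U₀) (hI₀ : InvMarginalOf I₀ U₀)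
    (hI₁ : IsInvMarginal I₁)
    (hfeq : ∀ y > 0, I₁ (a * y) + b * I₁ y = (1 + b) * I₀ (c * y))
    (hJ₁ : IsInverseOf J₁ I₁)
    (U₁ : ℝ → ℝ)
    (hU₁def : ∀ x > 0, U₁ x =
      U₀ 1 + p * (∫ ξ in (I₁ ((q / p) * deriv U₀ 1))..x, J₁ ξ)
        + (1 - p) * (∫ ξ in (I₁ (((1 - q) / (1 - p)) * deriv U₀ 1))..x, J₁ ξ)) :
    ∀ x > 0, ∀ Xu Xd πx : ℝ,
      Xu = I₁ ((q / p) * deriv U₀ x) →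
      Xd = I₁ (((1 - q) / (1 - p)) * deriv U₀ x) →
      πx = (Xu - Xd) / (u - d) →
      (-(x / (u - 1)) ≤ πx ∧ πx ≤ x / (1 - d)) ∧
      x + πx * (u - 1) = Xu ∧
      x + πx * (d - 1) = Xd ∧
      p * U₁ Xu + (1 - p) * U₁ Xd = U₀ x := by
  rintro x hx _ _ _ rfl rfl rfl
  have hq0 : 0 < q := hq ▸ riskNeutralProb_pos hu hd1
  have hq1 : q < 1 := hq ▸ riskNeutralProb_lt_one hu hd1
  have hku : 0 < q / p := div_pos hq0 hp0
  have hkd : 0 < (1 - q) / (1 - p) := div_pos (by linarith) (by linarith)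
  have hbudget : ∀ t > 0, q * optimalWealth I₁ U₀ (q / p) t
      + (1 - q) * optimalWealth I₁ U₀ ((1 - q) / (1 - p)) t = t := fun t ht =>
    budget_identity hp0 hp1 hq0 hq1 ha hb hc hfeq hU₀ hI₀ ht
  obtain ⟨hwu, hwd⟩ := wealth_eq_of_budget (by linarith) hq (hbudget x hx)
  have hU₁ : ∀ y > 0, HasDerivAt U₁ (J₁ y) y := fun y hy =>
    hasDerivAt_of_eq_weighted_integral hU₁def (hJ₁.continuousOn hI₁.strictAntiOn hI₁.1)
      (optimalWealth_pos hI₁ hU₀ hku one_pos) (optimalWealth_pos hI₁ hU₀ hkd one_pos) hy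
  refine ⟨admissible_of_wealth_nonneg hu hd1 hwu hwd (optimalWealth_pos hI₁ hU₀ hku hx).le
    (optimalWealth_pos hI₁ hU₀ hkd hx).le, hwu, hwd, ?_⟩
  exact expectedUtility_optimalWealth_eq hp0 hp1 hq0 hq1 hU₀ hI₁ hJ₁ hU₁ hbudget
    (weighted_sum_eq_of_eq_weighted_integral hU₁def (optimalWealth_pos hI₁ hU₀ hku one_pos)
      (optimalWealth_pos hI₁ hU₀ hkd one_pos)) hx

/-- With `U₁` constructed from a solution `I₁` of the functional equation, the
optimal wealths `Xu(x) = I₁((q/p)U₀'(x))`, `Xd(x) = I₁(((1−q)/(1−p))U₀'(x))` and the portfolio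
`π*(x) = (Xu(x) − Xd(x))/(u−d)` satisfy the admissibility bounds, the wealth equations, and
attain the supremum: `p·U₁(Xu(x)) + (1−p)·U₁(Xd(x)) = U₀(x)`. -/
theorem stmt4
    (u d p q a b c : ℝ)
    (hu : 1 < u) (hd0 : 0 < d) (hd1 : d < 1) (hp0 : 0 < p) (hp1 : p < 1)
    (hq : q = (1 - d) / (u - d)) (ha : a = ((1 - p) * q) / (p * (1 - q)))
    (hb : b = (1 - q) / q) (hc : c = (1 - p) / (1 - q))
    (U₀ I₀ I₁ J₁ : ℝ → ℝ)
    (hU₀ : IsUtility U₀) (hI₀ : InvMarginalOf I₀ U₀)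
    (hI₁ : IsInvMarginal I₁)
    (hfeq : ∀ y > 0, I₁ (a * y) + b * I₁ y = (1 + b) * I₀ (c * y))
    (hJ₁ : IsInverseOf J₁ I₁)
    (U₁ : ℝ → ℝ)
    (hU₁def : ∀ x > 0, U₁ x =
      U₀ 1 + p * (∫ ξ in (I₁ ((q / p) * deriv U₀ 1))..x, J₁ ξ)
        + (1 - p) * (∫ ξ in (I₁ (((1 - q) / (1 - p)) * deriv U₀ 1))..x, J₁ ξ)) :
    ∀ x > 0, ∀ Xu Xd πx : ℝ,
      Xu = I₁ ((q / p) * deriv U₀ x) →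
      Xd = I₁ (((1 - q) / (1 - p)) * deriv U₀ x) →
      πx = (Xu - Xd) / (u - d) →
      (-(x / (u - 1)) ≤ πx ∧ πx ≤ x / (1 - d)) ∧
      x + πx * (u - 1) = Xu ∧
      x + πx * (d - 1) = Xd ∧
      p * U₁ Xu + (1 - p) * U₁ Xd = U₀ x :=
  stmt4_general u d p q a b c hu hd1 hp0 hp1 hq ha hb hc U₀ I₀ I₁ J₁ hU₀ hI₀ hI₁ hfeq hJ₁ U₁ hU₁def
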